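/- arXiv:1506.01325 — 4 statements merged into one kernel-verified Lean document; each statement's English description precedes it below -/
import Mathlib

section
/- Let d ≥ 1 be an integer, let r be a real number with 0 < |r| < 1, let s be a real number, and let m₁, m₂ be positive real numbers. Then there exist a unique pair of real constants (α, β) and a unique real polynomial F such that F''(z) = (1 + r z)^{d−1} (2 d s r + (α z + β)(1 + r z)) for all real z, F(−1) = F(1) = 0, F'(−1) = 2(1−r)^d / m₂, and F'(1) = −2(1+r)^d / m₁. Moreover, this polynomial F has degree at most d + 3. -/
open Polynomial

/-- The boundary value problem characterizing the extremal polynomial of an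
admissible Kähler class: the extremal ODE
`F''(z) = (1 + r z)^(d-1) (2 d s r + (α z + β)(1 + r z))`
together with the endpoint conditions `F(±1) = 0`, `F'(-1) = 2(1-r)^d/m₂`,
`F'(1) = -2(1+r)^d/m₁`. -/
def ExtremalBVP (d : ℕ) (r s m₁ m₂ α β : ℝ) (F : Polynomial ℝ) : Prop :=
  (∀ z : ℝ, (derivative (derivative F)).eval z =
      (1 + r * z) ^ (d - 1) * (2 * (d : ℝ) * s * r + (α * z + β) * (1 + r * z))) ∧
  F.eval (-1) = 0 ∧ F.eval 1 = 0 ∧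
  (derivative F).eval (-1) = 2 * (1 - r) ^ d / m₂ ∧
  (derivative F).eval 1 = -2 * (1 + r) ^ d / m₁

/-!
Subtracting two solutions reduces uniqueness to the homogeneous problem
`G'' = Q ω`, `G = G' = 0` at `±1`, with `Q = αz + β` affine and weight
`ω = (1 + r z)^d > 0` on `[-1, 1]`. There `P = Q G' - Q' G` satisfies `P' = Q² ω ≥ 0` and
vanishes at both endpoints, so `P ≡ 0`, hence `Q = 0` and then `G = 0`. Existence follows by
linear algebra: the Cauchy data at `±1` of `F = H₀ + α H₁ + β H₂ + c z + e`, where the `Hᵢ` are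
second primitives of the right-hand side pieces, depend linearly and (by uniqueness) injectively
on `(α, β, c, e) ∈ ℝ⁴`, hence surjectively. Since `F''` has degree `≤ d + 1`, `F` has degree
`≤ d + 3`.
-/

namespace Polynomial

theorem exists_derivative_eq {K : Type*} [Field K] [CharZero K] (p : K[X]) :
    ∃ q : K[X], derivative q = p := by
  induction p using Polynomial.induction_on' with
  | add p q hp hq =>
    obtain ⟨P, rfl⟩ := hp
    obtain ⟨Q, rfl⟩ := hq
    exact ⟨P + Q, derivative_add⟩
  | monomial n a =>
    refine ⟨C (a / (n + 1)) * X ^ (n + 1), ?_⟩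
    rw [derivative_C_mul_X_pow, ← C_mul_X_pow_eq_monomial]
    congr 1
    push_cast
    field_simp

theorem exists_derivative_derivative_eq {K : Type*} [Field K] [CharZero K] (p : K[X]) :
    ∃ q : K[X], derivative (derivative q) = p := by
  obtain ⟨p₁, rfl⟩ := exists_derivative_eq p
  obtain ⟨q, rfl⟩ := exists_derivative_eq p₁
  exact ⟨q, rfl⟩

theorem natDegree_le_natDegree_derivative_derivative_add_two {R : Type*} [Semiring R]
    [IsAddTorsionFree R] (p : R[X]) :
    p.natDegree ≤ (derivative (derivative p)).natDegree + 2 := by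
  simp only [natDegree_derivative]
  omega

theorem C_mul_X_add_C_inj {R : Type*} [Semiring R] {α β α' β' : R} :
    C α * X + C β = C α' * X + C β' ↔ α = α' ∧ β = β' := by
  refine ⟨fun h => ?_, fun ⟨hα, hβ⟩ => hα ▸ hβ ▸ rfl⟩
  have h1 := congrArg (coeff · 1) h
  have h0 := congrArg (coeff · 0) h
  simp only [coeff_add, coeff_C_mul_X, coeff_C, if_true, if_false, one_ne_zero] at h1 h0
  simp_all

theorem eq_zero_of_derivative_nonneg_of_eval_eq_zero {a b : ℝ} (hab : a < b) {P : ℝ[X]}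
    (hP' : ∀ x ∈ Set.Icc a b, 0 ≤ (derivative P).eval x)
    (ha : P.eval a = 0) (hb : P.eval b = 0) : P = 0 := by
  have hmono : MonotoneOn (fun x => P.eval x) (Set.Icc a b) :=
    monotoneOn_of_deriv_nonneg (convex_Icc a b) P.continuous.continuousOn
      P.differentiable.differentiableOn
      fun x hx => by simpa only [Polynomial.deriv] using hP' x (interior_subset hx)
  refine eq_zero_of_infinite_isRoot P ((Set.Icc_infinite hab).mono fun x hx => ?_)
  have hle := hmono hx ⟨hab.le, le_rfl⟩ hx.2
  have hge := hmono ⟨le_rfl, hab.le⟩ hx hx.1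
  simp only [ha, hb] at hle hge
  exact le_antisymm hle hge

noncomputable def boundaryValues (a b : ℝ) : ℝ[X] →ₗ[ℝ] ℝ × ℝ × ℝ × ℝ :=
  (leval a).prod ((leval b).prod ((leval a ∘ₗ derivative).prod (leval b ∘ₗ derivative)))

theorem boundaryValues_apply (a b : ℝ) (p : ℝ[X]) :
    boundaryValues a b p = (p.eval a, p.eval b, (derivative p).eval a, (derivative p).eval b) :=
  rfl

theorem eq_zero_of_derivative_derivative_eq_zero {a b : ℝ} {G : ℝ[X]}
    (hG : derivative (derivative G) = 0) (hbv : boundaryValues a b G = 0) : G = 0 := by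
  simp only [boundaryValues_apply, Prod.mk_eq_zero] at hbv
  obtain ⟨hGa, -, hG'a, -⟩ := hbv
  have hG' : derivative G = 0 := by
    rw [eq_C_of_derivative_eq_zero hG] at hG'a ⊢
    simpa using hG'a
  rw [eq_C_of_derivative_eq_zero hG'] at hGa ⊢
  simpa using hGa

theorem eq_zero_of_derivative_derivative_eq_mul_weight {a b : ℝ} (hab : a < b) {ω Q G : ℝ[X]}
    (hω : ∀ x ∈ Set.Icc a b, 0 < ω.eval x) (hQ : derivative (derivative Q) = 0)
    (hG : derivative (derivative G) = Q * ω) (hbv : boundaryValues a b G = 0) :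
    Q = 0 ∧ G = 0 := by
  set P := Q * derivative G - derivative Q * G
  have hP' : derivative P = Q ^ 2 * ω := by
    simp only [P, derivative_sub, derivative_mul, hG, hQ]
    ring
  have hbv' := hbv
  simp only [boundaryValues_apply, Prod.mk_eq_zero] at hbv'
  obtain ⟨hGa, hGb, hG'a, hG'b⟩ := hbv'
  have hP : P = 0 := eq_zero_of_derivative_nonneg_of_eval_eq_zero hab
    (fun x hx => by
      rw [hP', eval_mul, eval_pow]
      exact mul_nonneg (sq_nonneg _) (hω x hx).le)
    (by simp [P, hGa, hG'a]) (by simp [P, hGb, hG'b])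
  have hω0 : ω ≠ 0 := fun h => by simpa [h] using hω a ⟨le_rfl, hab.le⟩
  have hQ0 : Q = 0 := by
    have : Q ^ 2 * ω = 0 := by rw [← hP', hP, derivative_zero]
    simpa [hω0] using this
  exact ⟨hQ0, eq_zero_of_derivative_derivative_eq_zero (by rw [hG, hQ0, zero_mul]) hbv⟩

noncomputable def homogeneousSolution (H₁ H₂ : ℝ[X]) : ℝ × ℝ × ℝ × ℝ →ₗ[ℝ] ℝ[X] where
  toFun v := C v.1 * H₁ + C v.2.1 * H₂ + C v.2.2.1 * X + C v.2.2.2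
  map_add' v w := by
    simp only [Prod.fst_add, Prod.snd_add, C_add]
    ring
  map_smul' c v := by
    simp only [Prod.smul_fst, Prod.smul_snd, smul_eq_mul, C_mul, RingHom.id_apply, smul_eq_C_mul]
    ring

theorem derivative_derivative_homogeneousSolution {ω H₁ H₂ : ℝ[X]}
    (hH₁ : derivative (derivative H₁) = X * ω) (hH₂ : derivative (derivative H₂) = ω)
    (v : ℝ × ℝ × ℝ × ℝ) :
    derivative (derivative (homogeneousSolution H₁ H₂ v)) = (C v.1 * X + C v.2.1) * ω := by
  simp only [homogeneousSolution, LinearMap.coe_mk, AddHom.coe_mk, derivative_add,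
    derivative_C_mul, derivative_X, derivative_C, derivative_zero, derivative_one, hH₁, hH₂]
  ring

theorem injective_boundaryValues_comp_homogeneousSolution {a b : ℝ} (hab : a < b)
    {ω H₁ H₂ : ℝ[X]} (hω : ∀ x ∈ Set.Icc a b, 0 < ω.eval x)
    (hH₁ : derivative (derivative H₁) = X * ω) (hH₂ : derivative (derivative H₂) = ω) :
    Function.Injective (boundaryValues a b ∘ₗ homogeneousSolution H₁ H₂) := by
  rw [← LinearMap.ker_eq_bot, LinearMap.ker_eq_bot']
  rintro ⟨α, β, c, e⟩ hv
  obtain ⟨hQ, hG⟩ := eq_zero_of_derivative_derivative_eq_mul_weight hab hω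
    (by simp) (derivative_derivative_homogeneousSolution hH₁ hH₂ _) hv
  obtain ⟨rfl, rfl⟩ : α = 0 ∧ β = 0 := C_mul_X_add_C_inj.mp (by simpa using hQ)
  obtain ⟨rfl, rfl⟩ : c = 0 ∧ e = 0 :=
    C_mul_X_add_C_inj.mp (by simpa [homogeneousSolution] using hG)
  rfl

theorem existsUnique_derivative_derivative_eq_add_affine_mul_weight {a b : ℝ} (hab : a < b)
    {ω : ℝ[X]} (hω : ∀ x ∈ Set.Icc a b, 0 < ω.eval x) (g : ℝ[X]) (y : ℝ × ℝ × ℝ × ℝ) :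
    ∃! x : ℝ × ℝ × ℝ[X], derivative (derivative x.2.2) = g + (C x.1 * X + C x.2.1) * ω ∧
      boundaryValues a b x.2.2 = y := by
  obtain ⟨H₀, hH₀⟩ := exists_derivative_derivative_eq g
  obtain ⟨H₁, hH₁⟩ := exists_derivative_derivative_eq (X * ω)
  obtain ⟨H₂, hH₂⟩ := exists_derivative_derivative_eq ω
  obtain ⟨v, hv⟩ := (LinearMap.injective_iff_surjective.mp
    (injective_boundaryValues_comp_homogeneousSolution hab hω hH₁ hH₂)) (y - boundaryValues a b H₀)
  refine ⟨(v.1, v.2.1, H₀ + homogeneousSolution H₁ H₂ v), ⟨?_, ?_⟩, ?_⟩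
  · rw [derivative_add, derivative_add, hH₀, derivative_derivative_homogeneousSolution hH₁ hH₂]
  · rw [map_add, ← LinearMap.comp_apply, hv, add_sub_cancel]
  rintro ⟨α, β, F⟩ ⟨hF, hFy⟩
  obtain ⟨hQ, hG⟩ := eq_zero_of_derivative_derivative_eq_mul_weight hab hω
    (Q := C (α - v.1) * X + C (β - v.2.1)) (G := F - (H₀ + homogeneousSolution H₁ H₂ v))
    (by simp) (by
      rw [derivative_sub, derivative_sub, hF, derivative_add, derivative_add, hH₀,
        derivative_derivative_homogeneousSolution hH₁ hH₂, C_sub, C_sub]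
      ring)
    (by rw [map_sub, map_add, ← LinearMap.comp_apply, hv, hFy]; abel)
  obtain ⟨hα, hβ⟩ := C_mul_X_add_C_inj.mp (hQ.trans (by simp : (0 : ℝ[X]) = C 0 * X + C 0))
  rw [sub_eq_zero.mp hα, sub_eq_zero.mp hβ, sub_eq_zero.mp hG]

end Polynomial

theorem eval_one_add_C_mul_X_pos {r x : ℝ} (hr : |r| < 1) (hx : x ∈ Set.Icc (-1 : ℝ) 1) :
    0 < (1 + C r * X).eval x := by
  have hrx : |r * x| < 1 := by
    rw [abs_mul]
    exact mul_lt_one_of_nonneg_of_lt_one_left (abs_nonneg r) hr (abs_le.mpr hx)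
  simpa [neg_lt_iff_pos_add'] using (abs_lt.mp hrx).1

-- The weight is `W ^ (d - 1) * W` rather than `W ^ d` so that the truncated `d - 1` of the
-- ODE is matched for every `d`, including `d = 0`.
theorem extremalBVP_iff (d : ℕ) (r s m₁ m₂ α β : ℝ) (F : ℝ[X]) :
    ExtremalBVP d r s m₁ m₂ α β F ↔
      derivative (derivative F) = C (2 * d * s * r) * (1 + C r * X) ^ (d - 1) +
        (C α * X + C β) * ((1 + C r * X) ^ (d - 1) * (1 + C r * X)) ∧
      boundaryValues (-1) 1 F = (0, 0, 2 * (1 - r) ^ d / m₂, -2 * (1 + r) ^ d / m₁) := by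
  rw [ExtremalBVP, boundaryValues_apply, Prod.mk.injEq, Prod.mk.injEq, Prod.mk.injEq]
  refine and_congr_left' ⟨fun h => funext fun z => ?_, fun h z => ?_⟩
  · simp only [h, eval_add, eval_mul, eval_pow, eval_C, eval_X, eval_one]
    ring
  · simp only [h, eval_add, eval_mul, eval_pow, eval_C, eval_X, eval_one]
    ring

theorem natDegree_extremal_rhs_le {d : ℕ} (hd : 1 ≤ d) (r s α β : ℝ) :
    (C (2 * d * s * r) * (1 + C r * X) ^ (d - 1) +
      (C α * X + C β) * ((1 + C r * X) ^ (d - 1) * (1 + C r * X))).natDegree ≤ d + 1 := by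
  compute_degree
  omega

theorem extremal_polynomial_exists_unique_general (d : ℕ) (hd : 1 ≤ d) (r s m₁ m₂ : ℝ)
    (hr1 : |r| < 1) :
    (∃! x : ℝ × ℝ × Polynomial ℝ, ExtremalBVP d r s m₁ m₂ x.1 x.2.1 x.2.2) ∧
    (∀ (α β : ℝ) (F : Polynomial ℝ), ExtremalBVP d r s m₁ m₂ α β F →
      F.natDegree ≤ d + 3) := by
  have hω : ∀ x ∈ Set.Icc (-1 : ℝ) 1, 0 < ((1 + C r * X) ^ (d - 1) * (1 + C r * X)).eval x :=
    fun x hx => by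
      have hW := eval_one_add_C_mul_X_pos hr1 hx
      rw [eval_mul, eval_pow]
      exact mul_pos (pow_pos hW _) hW
  refine ⟨(existsUnique_congr fun x => extremalBVP_iff ..).mpr
    (existsUnique_derivative_derivative_eq_add_affine_mul_weight (by norm_num) hω _ _),
    fun α β F hF => ?_⟩
  calc F.natDegree ≤ (derivative (derivative F)).natDegree + 2 :=
        natDegree_le_natDegree_derivative_derivative_add_two F
    _ ≤ d + 1 + 2 := by
        rw [((extremalBVP_iff ..).mp hF).1]
        exact Nat.add_le_add_right (natDegree_extremal_rhs_le hd r s α β) 2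

/-- There exist a unique pair of constants `(α, β)` and a unique polynomial `F`
solving the extremal boundary value problem, and this `F` has degree at most `d + 3`. -/
theorem extremal_polynomial_exists_unique (d : ℕ) (hd : 1 ≤ d) (r s m₁ m₂ : ℝ)
    (hr0 : 0 < |r|) (hr1 : |r| < 1) (hm₁ : 0 < m₁) (hm₂ : 0 < m₂) :
    (∃! x : ℝ × ℝ × Polynomial ℝ, ExtremalBVP d r s m₁ m₂ x.1 x.2.1 x.2.2) ∧
    (∀ (α β : ℝ) (F : Polynomial ℝ), ExtremalBVP d r s m₁ m₂ α β F →
      F.natDegree ≤ d + 3) :=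
  extremal_polynomial_exists_unique_general d hd r s m₁ m₂ hr1
end

section
/- Let d ≥ 1 be an integer, let r be a real number with 0 < |r| < 1, let s be a real number, and let m₁, m₂ be positive real numbers. Suppose F is a real polynomial and α, β are real constants with F''(z) = (1 + r z)^{d−1} (2 d s r + (α z + β)(1 + r z)) for all real z, F(−1) = F(1) = 0, F'(−1) = 2(1−r)^d / m₂, and F'(1) = −2(1+r)^d / m₁. If F has degree at most d + 2 (equivalently, α = 0), then F(z) > 0 for all z ∈ (−1, 1). -/
open Polynomial

/-- Mean value theorem for polynomials. -/
lemma poly_mvt (P : Polynomial ℝ) {a b : ℝ} (h : a < b) :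
    ∃ c ∈ Set.Ioo a b, (derivative P).eval c = (P.eval b - P.eval a) / (b - a) :=
  exists_hasDerivAt_eq_slope (fun x => P.eval x) (fun x => (derivative P).eval x) h
    (P.continuousOn) (fun x _ => P.hasDerivAt x)

/-- If the extremal polynomial has degree at most `d + 2`, then it is strictly
positive on `(-1, 1)` (so it defines an admissible CSC Kähler metric). -/
theorem extremal_polynomial_pos_of_degree_le (d : ℕ) (hd : 1 ≤ d) (r s m₁ m₂ : ℝ)
    (hr0 : 0 < |r|) (hr1 : |r| < 1) (hm₁ : 0 < m₁) (hm₂ : 0 < m₂)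
    (α β : ℝ) (F : Polynomial ℝ) (hF : ExtremalBVP d r s m₁ m₂ α β F)
    (hdeg : F.natDegree ≤ d + 2) :
    ∀ z : ℝ, -1 < z → z < 1 → 0 < F.eval z := by
  obtain ⟨hode, hFm1, hF1, hDm1, hD1⟩ := hF
  have hrne : r ≠ 0 := fun h => by simp [h] at hr0
  have hrlt : r < 1 := (abs_lt.mp hr1).2
  have hrgt : -1 < r := (abs_lt.mp hr1).1
  -- Step 1: α = 0
  have hα : α = 0 := by
    by_contra hα
    have hP : derivative (derivative F) =
        (C 1 + C r * X) ^ (d - 1) *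
          (C (2 * (d : ℝ) * s * r) + (C α * X + C β) * (C 1 + C r * X)) := by
      apply Polynomial.funext
      intro z
      rw [hode z]
      simp [eval_mul, eval_pow, eval_add]
    have hq : (C (2 * (d : ℝ) * s * r) + (C α * X + C β) * (C 1 + C r * X)).natDegree = 2 := by
      have : (C (2 * (d : ℝ) * s * r) + (C α * X + C β) * (C 1 + C r * X)) =
          C (α * r) * X ^ 2 + C (α + β * r) * X + C (β + 2 * (d : ℝ) * s * r) := by
        simp only [C_mul, C_add, map_one]
        ring
      rw [this, natDegree_quadratic (mul_ne_zero hα hrne)]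
    have hlin : (C 1 + C r * X : Polynomial ℝ).natDegree = 1 := by
      have : (C 1 + C r * X : Polynomial ℝ) = C r * X + C 1 := by ring
      rw [this, natDegree_linear hrne]
    have hlne : (C 1 + C r * X : Polynomial ℝ) ≠ 0 := fun h => by
      rw [h] at hlin; simp at hlin
    have hqne : (C (2 * (d : ℝ) * s * r) + (C α * X + C β) * (C 1 + C r * X)) ≠ 0 := fun h => by
      rw [h] at hq; simp at hq
    have hQdeg : ((C 1 + C r * X : Polynomial ℝ) ^ (d - 1) *
        (C (2 * (d : ℝ) * s * r) + (C α * X + C β) * (C 1 + C r * X))).natDegree = d + 1 := by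
      rw [natDegree_mul (pow_ne_zero _ hlne) hqne, natDegree_pow, hlin, hq]
      omega
    have hle : (derivative (derivative F)).natDegree ≤ d := by
      have h1 := natDegree_derivative_le F
      have h2 := natDegree_derivative_le (derivative F)
      omega
    rw [hP, hQdeg] at hle
    omega
  -- Step 2: analysis
  intro z hz1 hz2
  by_contra hcon
  push_neg at hcon
  -- positivity of 1 + r * x on (-1,1)
  have hpos : ∀ x : ℝ, -1 < x → x < 1 → 0 < 1 + r * x := by
    intro x hx1 hx2
    nlinarith [mul_pos (by linarith : (0:ℝ) < 1 + r) (by linarith : (0:ℝ) < 1 + x),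
      mul_pos (by linarith : (0:ℝ) < 1 - r) (by linarith : (0:ℝ) < 1 - x)]
  -- endpoint derivative signs
  have hDm1pos : 0 < (derivative F).eval (-1) := by
    rw [hDm1]
    exact div_pos (mul_pos two_pos (pow_pos (by linarith) d)) hm₂
  have hD1neg : (derivative F).eval 1 < 0 := by
    rw [hD1, show -2 * (1 + r) ^ d / m₁ = -(2 * (1 + r) ^ d / m₁) by ring, neg_neg_iff_pos]
    exact div_pos (mul_pos two_pos (pow_pos (by linarith) d)) hm₁
  -- MVT points for F
  obtain ⟨c0, hc0mem, hc0⟩ := poly_mvt F hz1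
  obtain ⟨c3, hc3mem, hc3⟩ := poly_mvt F hz2
  have hc0le : (derivative F).eval c0 ≤ 0 := by
    rw [hc0, hFm1]
    apply div_nonpos_of_nonpos_of_nonneg <;> linarith
  have hc3ge : 0 ≤ (derivative F).eval c3 := by
    rw [hc3, hF1]
    apply div_nonneg <;> linarith
  obtain ⟨hc0a, hc0b⟩ := hc0mem
  obtain ⟨hc3a, hc3b⟩ := hc3mem
  -- MVT points for F'
  obtain ⟨a1, ha1mem, ha1⟩ := poly_mvt (derivative F) hc0a
  obtain ⟨a2, ha2mem, ha2⟩ := poly_mvt (derivative F) (show c0 < c3 by linarith)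
  obtain ⟨a3, ha3mem, ha3⟩ := poly_mvt (derivative F) hc3b
  obtain ⟨ha1a, ha1b⟩ := ha1mem
  obtain ⟨ha2a, ha2b⟩ := ha2mem
  obtain ⟨ha3a, ha3b⟩ := ha3mem
  have hf1 : (derivative (derivative F)).eval a1 < 0 := by
    rw [ha1]
    apply div_neg_of_neg_of_pos <;> linarith
  have hf2 : 0 ≤ (derivative (derivative F)).eval a2 := by
    rw [ha2]
    apply div_nonneg <;> linarith
  have hf3 : (derivative (derivative F)).eval a3 < 0 := by
    rw [ha3]
    apply div_neg_of_neg_of_pos <;> linarith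
  -- translate to signs of g x = 2dsr + β(1+rx)
  have hg : ∀ x : ℝ, -1 < x → x < 1 →
      (derivative (derivative F)).eval x =
        (1 + r * x) ^ (d - 1) * (2 * (d : ℝ) * s * r + β * (1 + r * x)) := by
    intro x hx1 hx2
    rw [hode x, hα]
    ring
  have hp1 : (0:ℝ) < (1 + r * a1) ^ (d - 1) := pow_pos (hpos a1 (by linarith) (by linarith)) _
  have hp2 : (0:ℝ) < (1 + r * a2) ^ (d - 1) := pow_pos (hpos a2 (by linarith) (by linarith)) _
  have hp3 : (0:ℝ) < (1 + r * a3) ^ (d - 1) := pow_pos (hpos a3 (by linarith) (by linarith)) _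
  have hg1 : 2 * (d : ℝ) * s * r + β * (1 + r * a1) < 0 := by
    rw [hg a1 (by linarith) (by linarith)] at hf1
    by_contra h
    push_neg at h
    have := mul_nonneg hp1.le h
    linarith
  have hg2 : 0 ≤ 2 * (d : ℝ) * s * r + β * (1 + r * a2) := by
    rw [hg a2 (by linarith) (by linarith)] at hf2
    by_contra h
    push_neg at h
    have := mul_neg_of_pos_of_neg hp2 h
    linarith
  have hg3 : 2 * (d : ℝ) * s * r + β * (1 + r * a3) < 0 := by
    rw [hg a3 (by linarith) (by linarith)] at hf3
    by_contra h
    push_neg at h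
    have := mul_nonneg hp3.le h
    linarith
  -- g is affine in x: contradiction
  have h12 : a1 < a2 := by linarith
  have h23 : a2 < a3 := by linarith
  have e1 : (2 * (d : ℝ) * s * r + β * (1 + r * a2)) - (2 * (d : ℝ) * s * r + β * (1 + r * a1))
      = β * r * (a2 - a1) := by ring
  have e2 : (2 * (d : ℝ) * s * r + β * (1 + r * a3)) - (2 * (d : ℝ) * s * r + β * (1 + r * a2))
      = β * r * (a3 - a2) := by ring
  have hk1 : 0 < β * r * (a2 - a1) := by linarith
  have hk2 : β * r * (a3 - a2) < 0 := by linarith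
  have hkpos : 0 < β * r := by
    by_contra h
    push_neg at h
    have : β * r * (a2 - a1) ≤ 0 :=
      mul_nonpos_iff.mpr (Or.inr ⟨h, by linarith⟩)
    linarith
  have hkneg : β * r < 0 := by
    by_contra h
    push_neg at h
    have : 0 ≤ β * r * (a3 - a2) := mul_nonneg h (by linarith)
    linarith
  linarith
end

section
/- Let d ≥ 1 be an integer, let r be a real number with 0 < |r| < 1, let s be a real number with s·r ≥ 0, and let m₁, m₂ be positive real numbers. Suppose F is a real polynomial and α, β are real constants with F''(z) = (1 + r z)^{d−1} (2 d s r + (α z + β)(1 + r z)) for all real z, F(−1) = F(1) = 0, F'(−1) = 2(1−r)^d / m₂, and F'(1) = −2(1+r)^d / m₁. Then F(z) > 0 for all z ∈ (−1, 1). -/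
open Polynomial

/-! If `F ≤ 0` somewhere in `(-1, 1)`, then, since `F` vanishes at `±1` with `F'(-1) > 0 > F'(1)`,
two applications of the mean value theorem give points `a < b < c` in `(-1, 1)` with
`F''(a) < 0 ≤ F''(b)` and `F''(c) < 0`. On `(-1, 1)` the sign of `F''` is that of the quadratic
`q(z) = (α z + β)(1 + r z) + 2 d s r`, which is therefore strictly concave (so `r ≠ 0`) and
negative outside `[a, c]`. But `z = -1/r` lies outside `[-1, 1]` and `q(-1/r) = 2 d s r ≥ 0`. -/

section SignPattern

variable {f f' f'' : ℝ → ℝ}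

lemma exists_deriv_eq_slope_of_hasDerivAt (hf : ∀ x, HasDerivAt f (f' x) x) {a b : ℝ}
    (hab : a < b) : ∃ c ∈ Set.Ioo a b, f' c = (f b - f a) / (b - a) :=
  exists_hasDerivAt_eq_slope f f' hab
    (fun x _ => (hf x).continuousAt.continuousWithinAt) (fun x _ => hf x)

lemma exists_deriv_nonpos_of_le (hf : ∀ x, HasDerivAt f (f' x) x) {a b : ℝ} (hab : a < b)
    (h : f b ≤ f a) : ∃ c ∈ Set.Ioo a b, f' c ≤ 0 := by
  obtain ⟨c, hc, hslope⟩ := exists_deriv_eq_slope_of_hasDerivAt hf hab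
  exact ⟨c, hc, hslope ▸ div_nonpos_of_nonpos_of_nonneg (by linarith) (by linarith)⟩

lemma exists_deriv_neg_of_lt (hf : ∀ x, HasDerivAt f (f' x) x) {a b : ℝ} (hab : a < b)
    (h : f b < f a) : ∃ c ∈ Set.Ioo a b, f' c < 0 := by
  obtain ⟨c, hc, hslope⟩ := exists_deriv_eq_slope_of_hasDerivAt hf hab
  exact ⟨c, hc, hslope ▸ div_neg_of_neg_of_pos (by linarith) (by linarith)⟩

lemma exists_deriv_nonneg_of_le (hf : ∀ x, HasDerivAt f (f' x) x) {a b : ℝ} (hab : a < b)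
    (h : f a ≤ f b) : ∃ c ∈ Set.Ioo a b, 0 ≤ f' c := by
  obtain ⟨c, hc, hslope⟩ := exists_deriv_eq_slope_of_hasDerivAt hf hab
  exact ⟨c, hc, hslope ▸ div_nonneg (by linarith) (by linarith)⟩

lemma exists_second_deriv_neg_nonneg_neg (hf : ∀ x, HasDerivAt f (f' x) x)
    (hf' : ∀ x, HasDerivAt f' (f'' x) x) {x₀ x₁ z : ℝ} (hx₀ : f x₀ = 0) (hx₁ : f x₁ = 0)
    (hd₀ : 0 < f' x₀) (hd₁ : f' x₁ < 0) (hz₀ : x₀ < z) (hz₁ : z < x₁) (hz : f z ≤ 0) :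
    ∃ a b c, x₀ < a ∧ a < b ∧ b < c ∧ c < x₁ ∧ f'' a < 0 ∧ 0 ≤ f'' b ∧ f'' c < 0 := by
  obtain ⟨u, ⟨hu₀, huz⟩, hu⟩ := exists_deriv_nonpos_of_le hf hz₀ (by linarith)
  obtain ⟨v, ⟨hzv, hv₁⟩, hv⟩ := exists_deriv_nonneg_of_le hf hz₁ (by linarith)
  obtain ⟨a, ⟨ha₀, hau⟩, ha⟩ := exists_deriv_neg_of_lt hf' hu₀ (by linarith)
  obtain ⟨b, ⟨hub, hbv⟩, hb⟩ := exists_deriv_nonneg_of_le hf' (huz.trans hzv) (by linarith)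
  obtain ⟨c, ⟨hvc, hc₁⟩, hc⟩ := exists_deriv_neg_of_lt hf' hv₁ (by linarith)
  exact ⟨a, b, c, ha₀, hau.trans hub, hbv.trans hvc, hc₁, ha, hb, hc⟩

end SignPattern

section Quadratic

variable {q : ℝ → ℝ} {A B C a b c : ℝ}

lemma quadratic_lead_neg_of_neg_nonneg_neg (hq : ∀ x, q x = A * x ^ 2 + B * x + C)
    (hab : a < b) (hbc : b < c) (ha : q a < 0) (hb : 0 ≤ q b) (hc : q c < 0) : A < 0 := by
  -- `A (b - a) (c - b) (c - a) = (c - b) q a - (c - a) q b + (b - a) q c`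
  rw [hq] at ha hb hc
  by_contra! hA
  nlinarith [mul_neg_of_neg_of_pos ha (sub_pos.2 hbc), mul_neg_of_neg_of_pos hc (sub_pos.2 hab),
    mul_nonneg hb (sub_pos.2 (hab.trans hbc)).le,
    mul_nonneg hA (mul_pos (mul_pos (sub_pos.2 hbc) (sub_pos.2 hab)) (sub_pos.2 (hab.trans hbc))).le]

lemma quadratic_neg_of_neg_nonneg_neg (hq : ∀ x, q x = A * x ^ 2 + B * x + C)
    (hab : a < b) (hbc : b < c) (ha : q a < 0) (hb : 0 ≤ q b) (hc : q c < 0) {t : ℝ}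
    (ht : t < a ∨ c < t) : q t < 0 := by
  have hA := quadratic_lead_neg_of_neg_nonneg_neg hq hab hbc ha hb hc
  rw [hq] at ha hb hc ⊢
  rcases ht with ht | ht
  · have hpos := mul_pos (mul_pos (sub_pos.2 ht) (sub_pos.2 hab)) (sub_pos.2 (ht.trans hab))
    nlinarith [mul_pos (sub_pos.2 ht) (sub_pos.2 hab), mul_pos (neg_pos.2 hA) hpos]
  · have hpos := mul_pos (mul_pos (sub_pos.2 ht) (sub_pos.2 hbc)) (sub_pos.2 (hbc.trans ht))
    nlinarith [mul_pos (sub_pos.2 ht) (sub_pos.2 hbc), mul_pos (neg_pos.2 hA) hpos]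

end Quadratic

lemma lt_neg_one_or_one_lt_neg_inv {r : ℝ} (hr0 : r ≠ 0) (hr1 : |r| < 1) :
    -r⁻¹ < -1 ∨ 1 < -r⁻¹ := by
  have h : 1 < |r⁻¹| := by
    rw [abs_inv]
    exact (one_lt_inv₀ (abs_pos.2 hr0)).2 hr1
  rcases lt_abs.1 h with h | h
  · left; linarith
  · right; linarith

lemma one_add_mul_pos_of_abs_lt_one {r x : ℝ} (hr : |r| < 1) (hx₀ : -1 < x) (hx₁ : x < 1) :
    0 < 1 + r * x := by
  obtain ⟨hr₀, hr₁⟩ := abs_lt.1 hr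
  nlinarith

namespace ExtremalBVP

variable {d : ℕ} {r s m₁ m₂ α β : ℝ} {F : Polynomial ℝ}

lemma eval_deriv_neg_one_pos (hF : ExtremalBVP d r s m₁ m₂ α β F) (hr : |r| < 1)
    (hm₂ : 0 < m₂) : 0 < (derivative F).eval (-1) := by
  rw [hF.2.2.2.1]
  exact div_pos (mul_pos two_pos (pow_pos (by linarith [(abs_lt.1 hr).2]) _)) hm₂

lemma eval_deriv_one_neg (hF : ExtremalBVP d r s m₁ m₂ α β F) (hr : |r| < 1)
    (hm₁ : 0 < m₁) : (derivative F).eval 1 < 0 := by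
  rw [hF.2.2.2.2, neg_mul, neg_div, neg_lt_zero]
  exact div_pos (mul_pos two_pos (pow_pos (by linarith [(abs_lt.1 hr).1]) _)) hm₁

end ExtremalBVP

theorem extremal_polynomial_pos_of_nonneg_scalar_general (d : ℕ) (r s m₁ m₂ : ℝ)
    (hr1 : |r| < 1) (hsr : 0 ≤ s * r) (hm₁ : 0 < m₁) (hm₂ : 0 < m₂)
    (α β : ℝ) (F : Polynomial ℝ) (hF : ExtremalBVP d r s m₁ m₂ α β F) :
    ∀ z : ℝ, -1 < z → z < 1 → 0 < F.eval z := by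
  intro z hz₀ hz₁
  by_contra! hFz
  obtain ⟨a, b, c, ha₀, hab, hbc, hc₁, hFa, hFb, hFc⟩ :=
    exists_second_deriv_neg_nonneg_neg (fun x => F.hasDerivAt x)
      (fun x => (derivative F).hasDerivAt x) hF.2.1 hF.2.2.1
      (hF.eval_deriv_neg_one_pos hr1 hm₂) (hF.eval_deriv_one_neg hr1 hm₁) hz₀ hz₁ hFz
  set q : ℝ → ℝ := fun x => 2 * d * s * r + (α * x + β) * (1 + r * x)
  have hq : ∀ x, q x = α * r * x ^ 2 + (α + β * r) * x + (β + 2 * d * s * r) := fun x => by ring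
  have hweight : ∀ x, -1 < x → x < 1 → 0 < (1 + r * x) ^ (d - 1) := fun x hx₀ hx₁ =>
    pow_pos (one_add_mul_pos_of_abs_lt_one hr1 hx₀ hx₁) _
  have hqa : q a < 0 := neg_of_mul_neg_right (hF.1 a ▸ hFa) (hweight a ha₀ (by linarith)).le
  have hqb : 0 ≤ q b :=
    nonneg_of_mul_nonneg_right (hF.1 b ▸ hFb) (hweight b (by linarith) (by linarith))
  have hqc : q c < 0 := neg_of_mul_neg_right (hF.1 c ▸ hFc) (hweight c (by linarith) hc₁).le
  have hr : r ≠ 0 := by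
    rintro rfl
    simpa using quadratic_lead_neg_of_neg_nonneg_neg hq hab hbc hqa hqb hqc
  have hout : -r⁻¹ < a ∨ c < -r⁻¹ :=
    (lt_neg_one_or_one_lt_neg_inv hr hr1).imp (·.trans (by linarith)) (by linarith [·])
  have hpole : q (-r⁻¹) = 2 * d * (s * r) := by simp only [q]; field_simp; ring
  exact (quadratic_neg_of_neg_nonneg_neg hq hab hbc hqa hqb hqc hout).not_ge
    (hpole ▸ mul_nonneg (by positivity) hsr)

/-- If the base has nonnegative scalar curvature (`s * r ≥ 0`), then the extremal
polynomial is strictly positive on `(-1, 1)`. -/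
theorem extremal_polynomial_pos_of_nonneg_scalar (d : ℕ) (hd : 1 ≤ d) (r s m₁ m₂ : ℝ)
    (hr0 : 0 < |r|) (hr1 : |r| < 1) (hsr : 0 ≤ s * r) (hm₁ : 0 < m₁) (hm₂ : 0 < m₂)
    (α β : ℝ) (F : Polynomial ℝ) (hF : ExtremalBVP d r s m₁ m₂ α β F) :
    ∀ z : ℝ, -1 < z → z < 1 → 0 < F.eval z :=
  extremal_polynomial_pos_of_nonneg_scalar_general d r s m₁ m₂ hr1 hsr hm₁ hm₂ α β F hF
end

section
/- There exist a real number r with 0 < r < 1 and a real number s < 0 such that the unique real polynomial F satisfying (for some real constants α, β) F''(z) = 2 s r + (α z + β)(1 + r z) for all real z, F(−1) = F(1) = 0, F'(−1) = 2(1−r), and F'(1) = −2(1+r), is not strictly positive on (−1, 1), i.e., F(z₀) ≤ 0 for some z₀ ∈ (−1, 1). -/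
open Polynomial

/-- There exist `0 < r < 1` and `s < 0` such that the extremal polynomial of the
corresponding admissible class on a ruled surface (with `d = 1`, `m₁ = m₂ = 1`)
fails to be strictly positive on `(-1, 1)`: every solution of the boundary value
problem `F'' = 2sr + (αz+β)(1+rz)`, `F(±1) = 0`, `F'(-1) = 2(1-r)`,
`F'(1) = -2(1+r)` is nonpositive somewhere in `(-1, 1)`. -/
theorem exists_nonextremal_admissible_class :
    ∃ r s : ℝ, 0 < r ∧ r < 1 ∧ s < 0 ∧
      ∀ (F : Polynomial ℝ) (α β : ℝ),
        (∀ z : ℝ, (derivative (derivative F)).eval z =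
            2 * s * r + (α * z + β) * (1 + r * z)) →
        F.eval (-1) = 0 → F.eval 1 = 0 →
        (derivative F).eval (-1) = 2 * (1 - r) →
        (derivative F).eval 1 = -2 * (1 + r) →
        ∃ z₀ : ℝ, -1 < z₀ ∧ z₀ < 1 ∧ F.eval z₀ ≤ 0 := by
  refine ⟨1/2, -100, by norm_num, by norm_num, by norm_num, ?_⟩
  intro F α β h2 h3 h4 h5 h6
  set G : Polynomial ℝ :=
    C (β/2 - 50) * X^2 + C ((α + β/2)/6) * X^3 + C (α/24) * X^4 with hG
  have hd2 : derivative (derivative (F - G)) = 0 := by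
    apply Polynomial.funext
    intro z
    have hz := h2 z
    simp only [hG, derivative_sub, derivative_add, derivative_mul, derivative_C,
      derivative_X_pow, eval_sub, eval_add, eval_mul, eval_C, eval_pow, eval_X,
      eval_zero, zero_mul, add_zero, zero_add]
    push_cast
    linear_combination hz
  have h1 : (derivative (F - G)).natDegree = 0 :=
    natDegree_eq_zero_of_derivative_eq_zero hd2
  obtain ⟨c, hc⟩ := Polynomial.natDegree_eq_zero.mp h1
  have hd1 : derivative (F - G - C c * X) = 0 := by
    rw [derivative_sub, ← hc]
    simp
  have h0 : (F - G - C c * X).natDegree = 0 :=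
    natDegree_eq_zero_of_derivative_eq_zero hd1
  obtain ⟨a, ha⟩ := Polynomial.natDegree_eq_zero.mp h0
  have hFeq : F = C a + C c * X + G := by linear_combination -ha
  rw [hFeq] at h3 h4 h5 h6
  simp only [hG, derivative_add, derivative_mul, derivative_C, derivative_X_pow,
    derivative_X, eval_add, eval_mul, eval_C, eval_pow, eval_X, eval_one,
    zero_mul, add_zero, zero_add, mul_one] at h3 h4 h5 h6
  push_cast at h3 h4 h5 h6
  refine ⟨0, by norm_num, by norm_num, ?_⟩
  rw [hFeq]
  simp only [hG, eval_add, eval_mul, eval_C, eval_pow, eval_X]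
  -- F(0) = a, and the boundary conditions force a = -15/11
  nlinarith [h3, h4, h5, h6]
end
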